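/- Let F_q be a finite field with q elements, K a field extension of F_q of degree m, b an ordered F_q-basis of K, and α a generator of the cyclic group K^×. Let M_α := ε_b(α·b) ∈ GL_m(F_q) and Q := ε_b(b^q) ∈ GL_m(F_q). Then: (1) M_α·Q = Q·M_α^q (q-th matrix power of M_α); (2) the cyclic subgroups ⟨M_α⟩ and ⟨Q⟩ of GL_m(F_q) intersect trivially; (3) the set K := ⟨M_α⟩·⟨Q⟩ is a subgroup of GL_m(F_q) of cardinality m·(q^m − 1), and K is the internal semidirect product ⟨M_α⟩ ⋊ ⟨Q⟩ with ⟨M_α⟩ normal in K. -/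

import Mathlib

open Matrix Pointwise
open scoped MatrixGroups

/-- Matrix expansion with respect to an ordered basis `b` of `K` over `F`. -/
noncomputable def expand {F K : Type*} [Field F] [Field K] [Algebra F K] {m l : ℕ}
    (b : Module.Basis (Fin m) F K) (x : Fin l → K) : Matrix (Fin l) (Fin m) F :=
  Matrix.of fun i j => b.repr (x i) j

/-!
Write `Mα` and `Q` as the matrices, acting on coordinate rows, of multiplication by `α` and of
the Frobenius `x ↦ x ^ q`. The relation `Mα * Q = Q * Mα ^ q` is then `(α x) ^ q = α ^ q x ^ q`,
and `Mα`, `Q` have the orders of `α` and of the Frobenius, namely `q ^ m - 1` and `m`. A common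
element of `⟨Mα⟩` and `⟨Q⟩` is multiplication by some `β` that is also a field automorphism, so
`β = β * 1 = 1`. The relation makes `Q` normalize `⟨Mα⟩`, hence `⟨Mα⟩ * ⟨Q⟩ = ⟨Mα⟩ ⊔ ⟨Q⟩`, whose
order is `|⟨Mα⟩| * |⟨Q⟩|` since the intersection is trivial.
-/

namespace Subgroup

variable {G : Type*} [Group G]

theorem zpowers_le_normalizer_zpowers_of_mul_eq_mul_pow [Finite G] {a c : G} {n : ℕ}
    (h : a * c = c * a ^ n) : zpowers c ≤ normalizer (zpowers a : Set G) := by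
  have hconj : c⁻¹ * a * c = a ^ n := by rw [mul_assoc, h, inv_mul_cancel_left]
  refine zpowers_le.mpr (inv_mem_iff.mp (mem_normalizer_fintype ?_))
  rintro _ ⟨k, rfl⟩
  refine ⟨n * k, ?_⟩
  have := conj_zpow (i := k) (a := c⁻¹) (b := a)
  rw [inv_inv] at this
  rw [inv_inv, ← this, hconj, ← zpow_natCast, ← _root_.zpow_mul]

theorem card_sup_of_le_normalizer_of_disjoint {A C : Subgroup G}
    (hLE : C ≤ normalizer (A : Set G)) (hAC : Disjoint A C) :
    Nat.card ↥(A ⊔ C) = Nat.card A * Nat.card C := by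
  have hrange :
      ((A ⊔ C : Subgroup G) : Set G) = Set.range (fun g : A × C => (g.1 : G) * g.2) := by
    rw [coe_mul_of_right_le_normalizer_left A C hLE]
    ext x
    simp [Set.mem_mul]
  rw [← Nat.card_prod, ← Nat.card_range_of_injective (mul_injective_of_disjoint hAC), ← hrange,
    SetLike.coe_sort_coe]

theorem exists_zpowers_mul_zpowers_of_mul_eq_mul_pow [Finite G] {a c : G} {n : ℕ}
    (h : a * c = c * a ^ n) (hac : zpowers a ⊓ zpowers c = ⊥) :
    ∃ H : Subgroup G, (H : Set G) = (zpowers a : Set G) * (zpowers c : Set G) ∧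
      Nat.card H = orderOf a * orderOf c ∧ ((zpowers a).subgroupOf H).Normal := by
  have hLE := zpowers_le_normalizer_zpowers_of_mul_eq_mul_pow h
  refine ⟨zpowers a ⊔ zpowers c, ?_, ?_, ?_⟩
  · exact coe_mul_of_right_le_normalizer_left _ _ hLE
  · rw [card_sup_of_le_normalizer_of_disjoint hLE (disjoint_iff.mpr hac), Nat.card_zpowers,
      Nat.card_zpowers]
  · rw [sup_comm]
    exact normal_subgroupOf_sup_of_le_normalizer hLE

end Subgroup

section RowMatrix

variable {F K : Type*} [Field F] [Field K] [Algebra F K] {m : ℕ} (b : Module.Basis (Fin m) F K)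

/-- The matrix of `f` acting on coordinate rows: `ε_b(f x) = ε_b(x) * rowMatrix b f`. -/
noncomputable def rowMatrix (f : Module.End F K) : Matrix (Fin m) (Fin m) F :=
  (LinearMap.toMatrixAlgEquiv b f)ᵀ

theorem expand_apply_basis_eq_rowMatrix (f : Module.End F K) :
    expand b (fun i => f (b i)) = rowMatrix b f := by
  ext i j
  simp [expand, rowMatrix, LinearMap.toMatrixAlgEquiv_apply]

theorem rowMatrix_mul (f g : Module.End F K) :
    rowMatrix b (f * g) = rowMatrix b g * rowMatrix b f := by
  simp [rowMatrix, transpose_mul]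

theorem rowMatrix_one : rowMatrix b (1 : Module.End F K) = 1 := by
  simp [rowMatrix]

theorem rowMatrix_pow (f : Module.End F K) (k : ℕ) :
    rowMatrix b (f ^ k) = rowMatrix b f ^ k := by
  simp [rowMatrix, transpose_pow]

theorem rowMatrix_injective : Function.Injective (rowMatrix b) :=
  transpose_injective.comp (LinearMap.toMatrixAlgEquiv b).injective

theorem orderOf_rowMatrix (f : Module.End F K) : orderOf (rowMatrix b f) = orderOf f := by
  refine orderOf_eq_orderOf_iff.mpr fun k => ?_
  rw [← rowMatrix_pow, ← rowMatrix_one b, (rowMatrix_injective b).eq_iff]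

theorem orderOf_lmul (x : K) : orderOf (Algebra.lmul F K x) = orderOf x :=
  orderOf_injective (Algebra.lmul F K).toMonoidHom Algebra.lmul_injective x

theorem orderOf_toEnd (σ : K →ₐ[F] K) : orderOf (AlgHom.toEnd σ) = orderOf σ :=
  orderOf_injective AlgHom.toEnd (fun _ _ h => AlgHom.toLinearMap_injective h) σ

theorem FiniteField.toEnd_frobeniusAlgHom_mul_lmul [Fintype F] (x : K) :
    AlgHom.toEnd (frobeniusAlgHom F K) * Algebra.lmul F K x
      = Algebra.lmul F K (x ^ Fintype.card F) * AlgHom.toEnd (frobeniusAlgHom F K) := by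
  ext y
  simp [mul_pow]

theorem eq_one_of_lmul_eq_toEnd {x : K} {σ : K →ₐ[F] K}
    (h : Algebra.lmul F K x = AlgHom.toEnd σ) : x = 1 := by
  simpa using LinearMap.congr_fun h 1

theorem zpowers_inf_zpowers_eq_bot [Finite F] {a c : GL (Fin m) F} {x : K} {σ : K →ₐ[F] K}
    (ha : (a : Matrix (Fin m) (Fin m) F) = rowMatrix b (Algebra.lmul F K x))
    (hc : (c : Matrix (Fin m) (Fin m) F) = rowMatrix b (AlgHom.toEnd σ)) :
    Subgroup.zpowers a ⊓ Subgroup.zpowers c = ⊥ := by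
  refine eq_bot_iff.mpr fun g ⟨hga, hgc⟩ => ?_
  obtain ⟨i, rfl⟩ := mem_powers_iff_mem_zpowers.mpr hga
  obtain ⟨j, hj : c ^ j = a ^ i⟩ := mem_powers_iff_mem_zpowers.mpr hgc
  have hx : x ^ i = 1 := by
    refine eq_one_of_lmul_eq_toEnd (σ := σ ^ j) (rowMatrix_injective b ?_)
    rw [map_pow, map_pow, rowMatrix_pow, rowMatrix_pow, ← ha, ← hc, ← Units.val_pow_eq_pow_val,
      ← Units.val_pow_eq_pow_val, hj]
  refine Subgroup.mem_bot.mpr (Units.ext ?_)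
  rw [Units.val_pow_eq_pow_val, ha, ← rowMatrix_pow, ← map_pow, hx, map_one, rowMatrix_one,
    Units.val_one]

end RowMatrix

/-- **The subgroup generated by `M_α` and `Q`.**  Let `α` generate `K^×`, let
`Mα = ε_b(α • b)` be the matrix of multiplication by `α` and `Q = ε_b(b^q)` the matrix of
the `q`-power Frobenius (as elements of `GL_m(F)`).  Then `Mα * Q = Q * Mα^q`, the cyclic
subgroups `⟨Mα⟩` and `⟨Q⟩` intersect trivially, and the product set `⟨Mα⟩ * ⟨Q⟩` is a
subgroup of `GL_m(F)` of cardinality `m * (q^m - 1)` in which `⟨Mα⟩` is normal (an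
internal semidirect product `⟨Mα⟩ ⋊ ⟨Q⟩`). -/
theorem malpha_q_semidirect
    {F K : Type*} [Field F] [Fintype F] [Field K] [Fintype K] [Algebra F K] {m : ℕ}
    (hm : Module.finrank F K = m) (b : Module.Basis (Fin m) F K)
    (α : Kˣ) (hα : ∀ g : Kˣ, g ∈ Subgroup.zpowers α)
    (Mα Q : GL (Fin m) F)
    (hMα : (Mα : Matrix (Fin m) (Fin m) F) = expand b (fun i => (α : K) * b i))
    (hQ : (Q : Matrix (Fin m) (Fin m) F) = expand b (fun i => b i ^ Fintype.card F)) :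
    Mα * Q = Q * Mα ^ Fintype.card F ∧
    Subgroup.zpowers Mα ⊓ Subgroup.zpowers Q = ⊥ ∧
    ∃ H : Subgroup (GL (Fin m) F),
      (H : Set (GL (Fin m) F))
        = (Subgroup.zpowers Mα : Set (GL (Fin m) F)) * (Subgroup.zpowers Q : Set (GL (Fin m) F)) ∧
      Nat.card H = m * (Fintype.card F ^ m - 1) ∧
      ((Subgroup.zpowers Mα).subgroupOf H).Normal := by
  have hMα' : (Mα : Matrix (Fin m) (Fin m) F) = rowMatrix b (Algebra.lmul F K α) :=
    hMα.trans (expand_apply_basis_eq_rowMatrix b (Algebra.lmul F K α))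
  have hQ' : (Q : Matrix (Fin m) (Fin m) F)
      = rowMatrix b (AlgHom.toEnd (FiniteField.frobeniusAlgHom F K)) :=
    hQ.trans (expand_apply_basis_eq_rowMatrix b (AlgHom.toEnd (FiniteField.frobeniusAlgHom F K)))
  have hrel : Mα * Q = Q * Mα ^ Fintype.card F := by
    ext : 1
    simp only [Units.val_mul, Units.val_pow_eq_pow_val, hMα', hQ', ← rowMatrix_pow, ← map_pow,
      ← rowMatrix_mul, FiniteField.toEnd_frobeniusAlgHom_mul_lmul]
  have hordMα : orderOf Mα = Fintype.card F ^ m - 1 := by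
    rw [← orderOf_units, hMα', orderOf_rowMatrix, orderOf_lmul, orderOf_units,
      orderOf_eq_card_of_forall_mem_zpowers hα, Nat.card_units, Nat.card_eq_fintype_card,
      Module.card_eq_pow_finrank (K := F) (V := K), hm]
  have hordQ : orderOf Q = m := by
    rw [← orderOf_units, hQ', orderOf_rowMatrix, orderOf_toEnd,
      FiniteField.orderOf_frobeniusAlgHom, hm]
  have hdisj := zpowers_inf_zpowers_eq_bot b hMα' hQ'
  obtain ⟨H, hH, hcard, hnormal⟩ :=
    Subgroup.exists_zpowers_mul_zpowers_of_mul_eq_mul_pow hrel hdisj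
  exact ⟨hrel, hdisj, H, hH, by rw [hcard, hordMα, hordQ, mul_comm], hnormal⟩
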